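/- (Lemma 2) Let each f_{n,i} : ℝ^p → ℝ be differentiable, μ-strongly convex, with L-Lipschitz gradient. For any x = (x_1,…,x_N) ∈ ℝ^{Np} and gradient table y = (y_{n,i}), the average over index choices of the squared deviation of the stochastic averaging gradient from the optimal gradient satisfies Σ_{n=1}^N (1/q_n) Σ_{j=1}^{q_n} ‖ĝ_n(j) − ∇f_n(x̃*)‖² ≤ 4 L p(y) + 2(2L − μ) [f(x) − f(x*) − ⟨∇f(x*), x − x*⟩]. -/

import Mathlib

open Finset
open scoped RealInnerProductSpace

noncomputable section

/-- Block vectors of `ℝ^{Np}`: one vector of `ℝᵖ` per node. -/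
abbrev Evec (p : ℕ) := EuclideanSpace ℝ (Fin p)

/-- The local objective of node `n`: `f_n(w) = (1/q_n) ∑_i f_{n,i}(w)`. -/
def locf {N p : ℕ} {q : Fin N → ℕ}
    (f : (n : Fin N) → Fin (q n) → Evec p → ℝ) (n : Fin N) (w : Evec p) : ℝ :=
  (q n : ℝ)⁻¹ * ∑ i, f n i w

/-- The local stochastic averaging gradient of node `n` for index choice `j`:
`ĝ_n(j) = ∇f_{n,j}(x_n) − ∇f_{n,j}(y_{n,j}) + (1/q_n) ∑_i ∇f_{n,i}(y_{n,i})`. -/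
def hatg {N p : ℕ} {q : Fin N → ℕ}
    (f : (n : Fin N) → Fin (q n) → Evec p → ℝ)
    (x : Fin N → Evec p)
    (y : (n : Fin N) → Fin (q n) → Evec p)
    (n : Fin N) (j : Fin (q n)) : Evec p :=
  gradient (f n j) (x n) - gradient (f n j) (y n j)
    + (q n : ℝ)⁻¹ • ∑ i, gradient (f n i) (y n i)

/-- `p(y) = ∑_n (1/q_n) ∑_i [f_{n,i}(y_{n,i}) − f_{n,i}(x̃*) − ⟨∇f_{n,i}(x̃*), y_{n,i} − x̃*⟩]`. -/
def ptbl {N p : ℕ} {q : Fin N → ℕ}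
    (f : (n : Fin N) → Fin (q n) → Evec p → ℝ)
    (xstar : Evec p)
    (y : (n : Fin N) → Fin (q n) → Evec p) : ℝ :=
  ∑ n, (q n : ℝ)⁻¹ * ∑ i,
    (f n i (y n i) - f n i xstar - ⟪gradient (f n i) xstar, y n i - xstar⟫)

/-- The aggregate optimality gap `f(x) − f(x*) − ⟨∇f(x*), x − x*⟩`, written blockwise. -/
def optgap {N p : ℕ} {q : Fin N → ℕ}
    (f : (n : Fin N) → Fin (q n) → Evec p → ℝ)
    (xstar : Evec p) (x : Fin N → Evec p) : ℝ :=
  ∑ n, (locf f n (x n) - locf f n xstar - ⟪gradient (locf f n) xstar, x n - xstar⟫)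

/-- The quadratic form `aᵀ (M ⊗ I_p) a` of an extended weight matrix, written blockwise. -/
def quadForm {N p : ℕ} (M : Matrix (Fin N) (Fin N) ℝ) (a : Fin N → Evec p) : ℝ :=
  ∑ n, ⟪a n, ∑ m, M n m • a m⟫

/-- The squared Euclidean norm of a block vector of `ℝ^{Np}`. -/
def sqnormB {N p : ℕ} (a : Fin N → Evec p) : ℝ := ∑ n, ‖a n‖^2

/-- The gradient table obtained from `y` by replacing, at each node `n`, the entry
`i n` by the current iterate `x n`. -/
def tblUpd {N p : ℕ} {q : Fin N → ℕ}
    (x : Fin N → Evec p)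
    (y : (n : Fin N) → Fin (q n) → Evec p)
    (i : (n : Fin N) → Fin (q n)) : (n : Fin N) → Fin (q n) → Evec p :=
  fun n => Function.update (y n) (i n) (x n)

end

/-!
Write `A_j = ∇f_{n,j}(x_n) − ∇f_{n,j}(x̃*)`, `B_j = ∇f_{n,j}(y_{n,j}) − ∇f_{n,j}(x̃*)` and `B̄` for
the mean of the `B_j`, so that `ĝ_n(j) − ∇f_n(x̃*) = A_j − (B_j − B̄)`. For all vectors `A, Z, c`,
`‖A − Z‖² ≤ ‖A‖² + ‖A − c‖² + 2‖Z‖² − 2⟪c, Z⟫`; taking `c = μ (x_n − x̃*)`, the last term averages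
to zero over `j`, and the mean of `‖B_j − B̄‖²` is at most the mean of `‖B_j‖²`.
Cocoercivity of `f_{n,j}` bounds `‖B_j‖²` by `2L` times a Bregman divergence of `f_{n,j}`, and
cocoercivity of the convex, `(L − μ)`-smooth function `f_{n,j} − μ/2 ‖·‖²`, combined with the
descent lemma, bounds `‖A_j‖² + ‖A_j − μ (x_n − x̃*)‖²` by `2(2L − μ)` times the Bregman
divergence of `f_{n,j}` between `x_n` and `x̃*`.
-/

section Bregman

variable {E : Type*} [NormedAddCommGroup E] [InnerProductSpace ℝ E] [CompleteSpace E]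
  {g : E → ℝ}

noncomputable def bregman (g : E → ℝ) (u v : E) : ℝ := g u - g v - ⟪gradient g v, u - v⟫

lemma bregman_three_point (g : E → ℝ) (u v z : E) :
    bregman g z v = bregman g u v + bregman g z u + ⟪gradient g u - gradient g v, z - u⟫ := by
  simp only [bregman, inner_sub_left, inner_sub_right]
  ring

lemma bregman_add_bregman_swap (g : E → ℝ) (u v : E) :
    bregman g u v + bregman g v u = ⟪gradient g u - gradient g v, u - v⟫ := by
  simp only [bregman, inner_sub_left, inner_sub_right]
  ring

lemma Differentiable.hasDerivAt_comp_add_smul (hg : Differentiable ℝ g) (v w : E) (t : ℝ) :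
    HasDerivAt (fun s : ℝ => g (v + s • w)) ⟪gradient g (v + t • w), w⟫ t := by
  have hline : HasDerivAt (fun s : ℝ => v + s • w) w t := by
    simpa using ((hasDerivAt_id t).smul_const w).const_add v
  rw [inner_gradient_left]
  exact (hg _).hasFDerivAt.comp_hasDerivAt t hline

lemma ConvexOn.bregman_nonneg (hc : ConvexOn ℝ Set.univ g) (hg : Differentiable ℝ g)
    (u v : E) : 0 ≤ bregman g u v := by
  have hline : ConvexOn ℝ Set.univ fun t : ℝ => g (v + t • (u - v)) := by
    refine (hc.comp_affineMap (AffineMap.lineMap v u)).subset (Set.subset_univ _)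
      convex_univ |>.congr ?_
    intro t _
    simp [AffineMap.lineMap_apply_module', add_comm]
  have := hline.le_slope_of_hasDerivAt (Set.mem_univ 0) (Set.mem_univ 1) one_pos
    (hg.hasDerivAt_comp_add_smul v (u - v) 0)
  simp only [slope_def_field, zero_smul, add_zero, one_smul, add_sub_cancel] at this
  simp only [bregman]
  linarith

lemma bregman_le_of_lipschitz_gradient (hg : Differentiable ℝ g) {ℓ : ℝ}
    (hlip : ∀ a b, ‖gradient g a - gradient g b‖ ≤ ℓ * ‖a - b‖) (u v : E) :
    bregman g u v ≤ ℓ / 2 * ‖u - v‖ ^ 2 := by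
  set w := u - v
  let χ : ℝ → ℝ := fun t => g (v + t • w) - t * ⟪gradient g v, w⟫ - ℓ / 2 * t ^ 2 * ‖w‖ ^ 2
  have hχ : ∀ t, HasDerivAt χ
      (⟪gradient g (v + t • w) - gradient g v, w⟫ - ℓ * t * ‖w‖ ^ 2) t := by
    intro t
    have hq := ((hasDerivAt_pow 2 t).const_mul (ℓ / 2)).mul_const (‖w‖ ^ 2)
    refine (((hg.hasDerivAt_comp_add_smul v w t).sub
      ((hasDerivAt_id t).mul_const ⟪gradient g v, w⟫)).sub hq).congr_deriv ?_
    rw [inner_sub_left]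
    ring
  -- The Lipschitz bound makes `χ' ≤ 0` on `[0, 1]`.
  have hanti : AntitoneOn χ (Set.Icc 0 1) := by
    refine antitoneOn_of_deriv_nonpos (convex_Icc 0 1)
      (fun t _ => (hχ t).continuousAt.continuousWithinAt)
      (fun t _ => (hχ t).differentiableAt.differentiableWithinAt) fun t ht => ?_
    rw [interior_Icc] at ht
    rw [(hχ t).deriv, sub_nonpos]
    calc ⟪gradient g (v + t • w) - gradient g v, w⟫
        ≤ ‖gradient g (v + t • w) - gradient g v‖ * ‖w‖ := real_inner_le_norm _ _
      _ ≤ ℓ * ‖v + t • w - v‖ * ‖w‖ := by gcongr; exact hlip _ _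
      _ = ℓ * t * ‖w‖ ^ 2 := by
        rw [add_sub_cancel_left, norm_smul, Real.norm_of_nonneg ht.1.le]
        ring
  have h01 := hanti (Set.left_mem_Icc.2 zero_le_one) (Set.right_mem_Icc.2 zero_le_one)
    zero_le_one
  simp only [χ, w, zero_smul, add_zero, one_smul, zero_mul, sub_zero, add_sub_cancel, ne_eq,
    OfNat.ofNat_ne_zero, not_false_eq_true, zero_pow, mul_zero, one_pow] at h01
  simp only [bregman]
  linarith

lemma le_two_mul_mul_of_forall_mul_sub_le {a ℓ D : ℝ} (hℓ : 0 ≤ ℓ)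
    (h : ∀ t : ℝ, t * a - ℓ / 2 * t ^ 2 * a ≤ D) : a ≤ 2 * ℓ * D := by
  rcases hℓ.eq_or_lt with rfl | hℓ
  · by_contra! ha
    rw [mul_zero, zero_mul] at ha
    have := h ((D + 1) / a)
    simp only [zero_div, zero_mul, sub_zero, div_mul_cancel₀ _ ha.ne'] at this
    linarith
  · have := h ℓ⁻¹
    field_simp at this
    linarith

lemma ConvexOn.sq_norm_gradient_sub_le (hc : ConvexOn ℝ Set.univ g) (hg : Differentiable ℝ g)
    {ℓ : ℝ} (hℓ : 0 ≤ ℓ) (hsmooth : ∀ a b, bregman g a b ≤ ℓ / 2 * ‖a - b‖ ^ 2) (u v : E) :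
    ‖gradient g u - gradient g v‖ ^ 2 ≤ 2 * ℓ * bregman g u v := by
  set G := gradient g u - gradient g v
  refine le_two_mul_mul_of_forall_mul_sub_le hℓ fun t => ?_
  -- Test the three-point identity at `z = u - t • G`.
  have h3 := bregman_three_point g u v (u - t • G)
  have hz : u - t • G - u = -(t • G) := sub_sub_cancel_left u _
  rw [hz, inner_neg_right, real_inner_smul_right, real_inner_self_eq_norm_sq] at h3
  have hup := hsmooth (u - t • G) u
  rw [hz, norm_neg, norm_smul, mul_pow, Real.norm_eq_abs, sq_abs] at hup
  have := hc.bregman_nonneg hg (u - t • G) v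
  nlinarith

lemma Differentiable.gradient_sub_half_mul_sq_norm (hg : Differentiable ℝ g) (μ : ℝ) (w : E) :
    gradient (fun x => g x - μ / 2 * ‖x‖ ^ 2) w = gradient g w - μ • w := by
  refine HasGradientAt.gradient ?_
  rw [hasGradientAt_iff_hasFDerivAt, map_sub, map_smul, toDual_gradient]
  refine ((hg w).hasFDerivAt.sub
    ((hasStrictFDerivAt_norm_sq w).hasFDerivAt.const_mul (μ / 2))).congr_fderiv ?_
  ext z
  simp
  ring

lemma Differentiable.bregman_sub_half_mul_sq_norm (hg : Differentiable ℝ g) (μ : ℝ) (u v : E) :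
    bregman (fun x => g x - μ / 2 * ‖x‖ ^ 2) u v = bregman g u v - μ / 2 * ‖u - v‖ ^ 2 := by
  simp only [bregman, hg.gradient_sub_half_mul_sq_norm, inner_sub_left, real_inner_smul_left,
    norm_sub_sq_real, inner_sub_right, real_inner_self_eq_norm_sq, real_inner_comm u v]
  ring

lemma StrongConvexOn.sq_norm_gradient_sub_sub_smul_le {μ L : ℝ}
    (hsc : StrongConvexOn Set.univ μ g) (hg : Differentiable ℝ g) (hμL : μ ≤ L)
    (hlip : ∀ a b, ‖gradient g a - gradient g b‖ ≤ L * ‖a - b‖) (u v : E) :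
    ‖gradient g u - gradient g v - μ • (u - v)‖ ^ 2
      ≤ 2 * (L - μ) * (bregman g u v - μ / 2 * ‖u - v‖ ^ 2) := by
  -- Apply cocoercivity to the convex, `(L - μ)`-smooth function `g - μ/2 ‖·‖²`.
  have hh : Differentiable ℝ fun x => g x - μ / 2 * ‖x‖ ^ 2 :=
    hg.sub (((contDiff_norm_sq ℝ (n := 1)).differentiable one_ne_zero).const_mul _)
  have h := (strongConvexOn_iff_convex.mp hsc).sq_norm_gradient_sub_le hh (sub_nonneg.2 hμL)
    (fun a b => by
      rw [hg.bregman_sub_half_mul_sq_norm]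
      linarith [bregman_le_of_lipschitz_gradient hg hlip a b]) u v
  rwa [hg.gradient_sub_half_mul_sq_norm, hg.gradient_sub_half_mul_sq_norm,
    hg.bregman_sub_half_mul_sq_norm, sub_sub_sub_comm, ← smul_sub] at h

lemma StrongConvexOn.sq_norm_gradient_sub_add_le {μ L : ℝ}
    (hsc : StrongConvexOn Set.univ μ g) (hg : Differentiable ℝ g) (hμ : 0 ≤ μ) (hμL : μ ≤ L)
    (hlip : ∀ a b, ‖gradient g a - gradient g b‖ ≤ L * ‖a - b‖) (u v : E) :
    ‖gradient g u - gradient g v‖ ^ 2 + ‖gradient g u - gradient g v - μ • (u - v)‖ ^ 2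
      ≤ 2 * (2 * L - μ) * bregman g u v := by
  set G := gradient g u - gradient g v
  have hU := hsc.sq_norm_gradient_sub_sub_smul_le hg hμL hlip u v
  have hexp : ‖G‖ ^ 2 = ‖G - μ • (u - v)‖ ^ 2 + 2 * μ * ⟪G, u - v⟫ - μ ^ 2 * ‖u - v‖ ^ 2 := by
    rw [norm_sub_sq_real G, norm_smul, real_inner_smul_right, Real.norm_eq_abs, mul_pow, sq_abs]
    ring
  have hsym := bregman_add_bregman_swap g u v
  have hswap := bregman_le_of_lipschitz_gradient hg hlip v u
  rw [norm_sub_rev] at hswap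
  nlinarith [mul_le_mul_of_nonneg_left hswap hμ, mul_nonneg hμ (sub_nonneg.2 hμL),
    sq_nonneg ‖u - v‖]

lemma gradient_const_mul_sum {ι : Type*} [Fintype ι] (c : ℝ) {φ : ι → E → ℝ}
    (hφ : ∀ i, Differentiable ℝ (φ i)) (w : E) :
    gradient (fun x => c * ∑ i, φ i x) w = c • ∑ i, gradient (φ i) w := by
  refine HasGradientAt.gradient ?_
  rw [hasGradientAt_iff_hasFDerivAt, map_smul, map_sum]
  simp only [toDual_gradient]
  exact (HasFDerivAt.fun_sum fun i _ => (hφ i w).hasFDerivAt).const_mul c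

end Bregman

section Average

variable {ι E : Type*} [Fintype ι] [NormedAddCommGroup E] [InnerProductSpace ℝ E]

lemma sum_sub_average_eq_zero (b : ι → E) :
    ∑ j, (b j - (Fintype.card ι : ℝ)⁻¹ • ∑ i, b i) = 0 := by
  rcases isEmpty_or_nonempty ι with hι | hι
  · simp
  rw [Finset.sum_sub_distrib, Finset.sum_const, Finset.card_univ, ← Nat.cast_smul_eq_nsmul ℝ,
    smul_inv_smul₀ (Nat.cast_ne_zero.2 Fintype.card_ne_zero), sub_self]

lemma sum_sq_norm_sub_average_le (b : ι → E) :
    ∑ j, ‖b j - (Fintype.card ι : ℝ)⁻¹ • ∑ i, b i‖ ^ 2 ≤ ∑ j, ‖b j‖ ^ 2 := by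
  set m := (Fintype.card ι : ℝ)⁻¹ • ∑ i, b i
  have hsum : ∑ j, ⟪b j - m, m⟫ = 0 := by
    rw [← sum_inner, sum_sub_average_eq_zero, inner_zero_left]
  calc ∑ j, ‖b j - m‖ ^ 2
      ≤ ∑ j, (‖b j - m‖ ^ 2 + 2 * ⟪b j - m, m⟫ + ‖m‖ ^ 2) := by
        rw [Finset.sum_add_distrib, Finset.sum_add_distrib, ← Finset.mul_sum, hsum]
        simp only [mul_zero, add_zero, le_add_iff_nonneg_right]
        positivity
    _ = ∑ j, ‖b j‖ ^ 2 := by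
        simp only [← norm_add_sq_real, sub_add_cancel]

lemma norm_sub_sq_add_norm_sub_add_sq (a c z : E) :
    ‖a - z‖ ^ 2 + ‖a - c + z‖ ^ 2 = ‖a‖ ^ 2 + ‖a - c‖ ^ 2 + 2 * ‖z‖ ^ 2 - 2 * ⟪c, z⟫ := by
  rw [norm_sub_sq_real, norm_add_sq_real, inner_sub_left]
  ring

lemma sum_sq_norm_sub_add_average_le (a b : ι → E) (c : E) :
    ∑ j, ‖a j - b j + (Fintype.card ι : ℝ)⁻¹ • ∑ i, b i‖ ^ 2
      ≤ ∑ j, (‖a j‖ ^ 2 + ‖a j - c‖ ^ 2) + 2 * ∑ j, ‖b j‖ ^ 2 := by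
  set z := fun j => b j - (Fintype.card ι : ℝ)⁻¹ • ∑ i, b i
  have hz : ∑ j, ⟪c, z j⟫ = 0 := by rw [← inner_sum, sum_sub_average_eq_zero, inner_zero_right]
  have hpt : ∀ j, ‖a j - b j + (Fintype.card ι : ℝ)⁻¹ • ∑ i, b i‖ ^ 2
      ≤ ‖a j‖ ^ 2 + ‖a j - c‖ ^ 2 + 2 * ‖z j‖ ^ 2 - 2 * ⟪c, z j⟫ := fun j => by
    rw [← norm_sub_sq_add_norm_sub_add_sq, sub_add]
    exact le_add_of_nonneg_right (sq_nonneg _)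
  calc _ ≤ ∑ j, (‖a j‖ ^ 2 + ‖a j - c‖ ^ 2 + 2 * ‖z j‖ ^ 2 - 2 * ⟪c, z j⟫) :=
        Finset.sum_le_sum fun j _ => hpt j
    _ = ∑ j, (‖a j‖ ^ 2 + ‖a j - c‖ ^ 2) + 2 * ∑ j, ‖z j‖ ^ 2 := by
        rw [Finset.sum_sub_distrib, Finset.sum_add_distrib, ← Finset.mul_sum, ← Finset.mul_sum,
          hz, mul_zero, sub_zero]
    _ ≤ _ := by grw [sum_sq_norm_sub_average_le b]

end Average

section DSA

variable {N p : ℕ} {q : Fin N → ℕ} {f : (n : Fin N) → Fin (q n) → Evec p → ℝ}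

lemma ptbl_eq_sum_bregman (xstar : Evec p) (y : (n : Fin N) → Fin (q n) → Evec p) :
    ptbl f xstar y = ∑ n, (q n : ℝ)⁻¹ * ∑ i, bregman (f n i) (y n i) xstar := rfl

lemma optgap_eq_sum_bregman (xstar : Evec p) (x : Fin N → Evec p) :
    optgap f xstar x = ∑ n, bregman (locf f n) (x n) xstar := rfl

lemma gradient_locf (hdiff : ∀ n i, Differentiable ℝ (f n i)) (n : Fin N) (w : Evec p) :
    gradient (locf f n) w = (q n : ℝ)⁻¹ • ∑ i, gradient (f n i) w :=
  gradient_const_mul_sum _ (hdiff n) w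

lemma bregman_locf (hdiff : ∀ n i, Differentiable ℝ (f n i)) (n : Fin N) (u v : Evec p) :
    bregman (locf f n) u v = (q n : ℝ)⁻¹ * ∑ i, bregman (f n i) u v := by
  simp only [bregman, gradient_locf hdiff, locf, real_inner_smul_left, sum_inner,
    Finset.sum_sub_distrib]
  ring

lemma hatg_sub_gradient_locf (hdiff : ∀ n i, Differentiable ℝ (f n i)) (xstar : Evec p)
    (x : Fin N → Evec p) (y : (n : Fin N) → Fin (q n) → Evec p) (n : Fin N) (j : Fin (q n)) :
    hatg f x y n j - gradient (locf f n) xstar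
      = (gradient (f n j) (x n) - gradient (f n j) xstar)
        - (gradient (f n j) (y n j) - gradient (f n j) xstar)
        + (q n : ℝ)⁻¹ • ∑ i, (gradient (f n i) (y n i) - gradient (f n i) xstar) := by
  rw [gradient_locf hdiff, hatg, Finset.sum_sub_distrib, smul_sub]
  abel

lemma sum_sq_norm_hatg_sub_gradient_locf_le {μ L : ℝ} (hμ : 0 ≤ μ) (hμL : μ ≤ L)
    (hdiff : ∀ n i, Differentiable ℝ (f n i)) (hsc : ∀ n i, StrongConvexOn Set.univ μ (f n i))
    (hlip : ∀ n i a b, ‖gradient (f n i) a - gradient (f n i) b‖ ≤ L * ‖a - b‖)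
    (xstar : Evec p) (x : Fin N → Evec p) (y : (n : Fin N) → Fin (q n) → Evec p) (n : Fin N) :
    ∑ j, ‖hatg f x y n j - gradient (locf f n) xstar‖ ^ 2
      ≤ 4 * L * ∑ j, bregman (f n j) (y n j) xstar
        + 2 * (2 * L - μ) * ∑ j, bregman (f n j) (x n) xstar := by
  have hcoco : ∀ j, ‖gradient (f n j) (y n j) - gradient (f n j) xstar‖ ^ 2
      ≤ 2 * L * bregman (f n j) (y n j) xstar := fun j =>
    (strongConvexOn_zero.1 ((hsc n j).mono hμ)).sq_norm_gradient_sub_le (hdiff n j)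
      (hμ.trans hμL) (bregman_le_of_lipschitz_gradient (hdiff n j) (hlip n j)) _ _
  have havg := sum_sq_norm_sub_add_average_le
    (fun j => gradient (f n j) (x n) - gradient (f n j) xstar)
    (fun j => gradient (f n j) (y n j) - gradient (f n j) xstar) (μ • (x n - xstar))
  rw [Fintype.card_fin] at havg
  simp_rw [hatg_sub_gradient_locf hdiff]
  calc _ ≤ _ := havg
    _ ≤ ∑ j, 2 * (2 * L - μ) * bregman (f n j) (x n) xstar
        + 2 * ∑ j, 2 * L * bregman (f n j) (y n j) xstar := by
      gcongr with j _ j _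
      · exact (hsc n j).sq_norm_gradient_sub_add_le (hdiff n j) hμ hμL (hlip n j) _ _
      · exact hcoco j
    _ = _ := by
      rw [← Finset.mul_sum, ← Finset.mul_sum]
      ring

end DSA

theorem dsa_lemma2_gradient_noise_bound_general
    {N p : ℕ} {q : Fin N → ℕ}
    (μ L : ℝ) (hμ : 0 < μ) (hμL : μ ≤ L)
    (f : (n : Fin N) → Fin (q n) → Evec p → ℝ)
    (hdiff : ∀ n i, Differentiable ℝ (f n i))
    (hsc : ∀ n i, StrongConvexOn Set.univ μ (f n i))
    (hlip : ∀ n i a b, ‖gradient (f n i) a - gradient (f n i) b‖ ≤ L * ‖a - b‖)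
    (xstar : Evec p)
    (x : Fin N → Evec p)
    (y : (n : Fin N) → Fin (q n) → Evec p) :
    ∑ n, (q n : ℝ)⁻¹ * ∑ j, ‖hatg f x y n j - gradient (locf f n) xstar‖^2
      ≤ 4 * L * ptbl f xstar y + 2 * (2 * L - μ) * optgap f xstar x := by
  rw [ptbl_eq_sum_bregman, optgap_eq_sum_bregman, Finset.mul_sum, Finset.mul_sum,
    ← Finset.sum_add_distrib]
  refine Finset.sum_le_sum fun n _ => ?_
  rw [bregman_locf hdiff]
  calc _ ≤ (q n : ℝ)⁻¹ * (4 * L * ∑ j, bregman (f n j) (y n j) xstar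
        + 2 * (2 * L - μ) * ∑ j, bregman (f n j) (x n) xstar) := by
        gcongr
        exact sum_sq_norm_hatg_sub_gradient_locf_le hμ.le hμL hdiff hsc hlip xstar x y n
    _ = _ := by ring

/-- **Lemma 2 of the DSA paper.**  If every `f_{n,i}` is differentiable,
`μ`-strongly convex with `L`-Lipschitz gradient, then for any iterate `x` and any
gradient table `y` the average (over the uniform index choice at each node) of the
squared deviation of the stochastic averaging gradient from the optimal gradient
satisfies
`∑_n (1/q_n) ∑_j ‖ĝ_n(j) − ∇f_n(x̃*)‖² ≤ 4L p(y) + 2(2L−μ)[f(x) − f(x*) − ⟨∇f(x*), x−x*⟩]`. -/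
theorem dsa_lemma2_gradient_noise_bound
    {N p : ℕ} {q : Fin N → ℕ} (hq : ∀ n, 0 < q n)
    (μ L : ℝ) (hμ : 0 < μ) (hμL : μ ≤ L)
    (f : (n : Fin N) → Fin (q n) → Evec p → ℝ)
    (hdiff : ∀ n i, Differentiable ℝ (f n i))
    (hsc : ∀ n i, StrongConvexOn Set.univ μ (f n i))
    (hlip : ∀ n i a b, ‖gradient (f n i) a - gradient (f n i) b‖ ≤ L * ‖a - b‖)
    (xstar : Evec p)
    (hxstar : ∀ w, ∑ n, locf f n xstar ≤ ∑ n, locf f n w)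
    (x : Fin N → Evec p)
    (y : (n : Fin N) → Fin (q n) → Evec p) :
    ∑ n, (q n : ℝ)⁻¹ * ∑ j, ‖hatg f x y n j - gradient (locf f n) xstar‖^2
      ≤ 4 * L * ptbl f xstar y + 2 * (2 * L - μ) * optgap f xstar x :=
  dsa_lemma2_gradient_noise_bound_general μ L hμ hμL f hdiff hsc hlip xstar x y
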